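/- Let H be a hypertree with hyperedges of size at most three. Then the size-three hyperedges of H can each be shrunk to a size-two edge contained in them so that the resulting graph is a spanning tree T' with deg_{T'}(v) ≥ deg_H(v)/100 for every vertex v, where deg_H(v) counts the hyperedges of H containing v. -/

import Mathlib

/-- Adjacency in a hypergraph with hyperedges given as multisets. -/
def HAdj {V E : Type} (edges : E → Multiset V) (u v : V) : Prop :=
  ∃ e : E, u ∈ edges e ∧ v ∈ edges e

/-- The hypergraph is connected. -/
def HConn {V E : Type} (edges : E → Multiset V) : Prop :=
  ∀ u v : V, Relation.ReflTransGen (HAdj edges) u v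

/-- The hyperedges form a hypertree: `|V| - 1` hyperedges, every vertex covered,
and at most `|X| - 1` hyperedges inside any `X ⊆ V`. -/
def IsHypertree {V E : Type} [Fintype V] [Fintype E]
    (edges : E → Multiset V) : Prop :=
  Fintype.card E = Fintype.card V - 1 ∧
  (∀ v : V, ∃ e : E, v ∈ edges e) ∧
  ∀ X : Set V,
    Nat.card {e : E // ∀ x ∈ edges e, x ∈ X} ≤ Nat.card X - 1

/-!
Each hyperedge is first assigned, by Hall's theorem, to one of its vertices so that every vertex
`v` owns at least `deg v / 3` hyperedges. The triples are then shrunk one at a time to a pair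
through their owner while keeping Lovász's hyperforest condition (every nonempty `X` spans fewer
than `#X` hyperedges): of the two pairs through the owner at least one is not blocked by a tight
set, because two blocking tight sets would uncross. A graph with `#V - 1` edges satisfying the
hyperforest condition is connected, so every vertex keeps degree at least one, and
`d ≤ 100 * max 1 (d / 3)` for `d ≥ 1`.
-/

open Finset

lemma HConn.exists_mem {V E : Type} {g : E → Multiset V} (h : HConn g) {u v : V} (huv : u ≠ v) :
    ∃ e, v ∈ g e := by
  rcases (h v u).cases_head with rfl | ⟨w, ⟨e, hv, -⟩, -⟩
  · exact absurd rfl huv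
  · exact ⟨e, hv⟩

namespace Hypergraph

variable {V E : Type} [Fintype V] [Fintype E] [DecidableEq V]

def insideEdges (g : E → Multiset V) (X : Finset V) : Finset E :=
  {e | ∀ x ∈ g e, x ∈ X}

@[simp]
lemma mem_insideEdges {g : E → Multiset V} {X : Finset V} {e : E} :
    e ∈ insideEdges g X ↔ ∀ x ∈ g e, x ∈ X := by
  simp [insideEdges]

lemma insideEdges_mono (g : E → Multiset V) {X Y : Finset V} (h : X ⊆ Y) :
    insideEdges g X ⊆ insideEdges g Y := fun _ he ↦
  mem_insideEdges.2 fun x hx ↦ h (mem_insideEdges.1 he x hx)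

def IsHyperforest (g : E → Multiset V) : Prop :=
  ∀ X : Finset V, X.Nonempty → #(insideEdges g X) < #X

def IsTight (g : E → Multiset V) (X : Finset V) : Prop :=
  #(insideEdges g X) + 1 = #X

variable {g : E → Multiset V}

/-- Uncrossing: `#(insideEdges g (X ∪ Y)) ≤ #(insideEdges g X ∪ insideEdges g Y)` follows from
supermodularity of `insideEdges` and the hyperforest bound on `X ∪ Y` and `X ∩ Y`. -/
lemma IsHyperforest.insideEdges_union_subset [DecidableEq E] (hg : IsHyperforest g)
    {X Y : Finset V} (hX : IsTight g X) (hY : IsTight g Y) (hXY : (X ∩ Y).Nonempty) :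
    insideEdges g (X ∪ Y) ⊆ insideEdges g X ∪ insideEdges g Y := by
  have hsub : insideEdges g X ∪ insideEdges g Y ⊆ insideEdges g (X ∪ Y) :=
    union_subset (insideEdges_mono g subset_union_left) (insideEdges_mono g subset_union_right)
  have hinter : insideEdges g X ∩ insideEdges g Y ⊆ insideEdges g (X ∩ Y) := fun e he ↦ by
    simp only [mem_inter, mem_insideEdges] at he ⊢
    exact fun x hx ↦ ⟨he.1 x hx, he.2 x hx⟩
  have hunion := hg (X ∪ Y) (hXY.mono inter_subset_union)
  have hinter' := (card_le_card hinter).trans_lt (hg (X ∩ Y) hXY)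
  have := card_union_add_card_inter (insideEdges g X) (insideEdges g Y)
  have := card_union_add_card_inter X Y
  unfold IsTight at hX hY
  exact (eq_of_subset_of_card_le hsub (by omega)).ge

/-- Only the sets containing `m` but not `g e` gain a hyperedge, and by `hblock` those are not
tight. -/
lemma IsHyperforest.update [DecidableEq E] {e : E} {m : Multiset V} (hg : IsHyperforest g)
    (hm : m ≤ g e)
    (hblock : ∀ X, IsTight g X → (∀ x ∈ m, x ∈ X) → ∀ x ∈ g e, x ∈ X) :
    IsHyperforest (Function.update g e m) := by
  intro X hX
  have hsub : insideEdges (Function.update g e m) X ⊆ insert e (insideEdges g X) := by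
    intro e' he'
    rcases eq_or_ne e' e with rfl | hne
    · exact mem_insert_self _ _
    · exact mem_insert_of_mem (by simpa [Function.update_of_ne hne] using he')
  by_cases hnew : e ∈ insideEdges (Function.update g e m) X ∧ e ∉ insideEdges g X
  · obtain ⟨hin, hout⟩ := hnew
    have hm : ∀ x ∈ m, x ∈ X := by simpa using hin
    have hnt : ¬IsTight g X := fun ht ↦ hout (mem_insideEdges.2 (hblock X ht hm))
    have := hg X hX
    have := (card_le_card hsub).trans (card_insert_le _ _)
    unfold IsTight at hnt
    omega
  · refine (card_le_card fun e' he' ↦ ?_).trans_lt (hg X hX)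
    rcases eq_or_ne e' e with rfl | hne
    · tauto
    · simpa [Function.update_of_ne hne] using he'

/-- Writing `g e = {a, b, c}`: if `{a, b}` and `{a, c}` were blocked by tight sets `X ∌ c` and
`Y ∌ b`, uncrossing would put `g e` inside `X` or inside `Y`. -/
lemma IsHyperforest.exists_update_pair [DecidableEq E] {e : E} {a : V} (hg : IsHyperforest g)
    (h3 : Multiset.card (g e) = 3) (ha : a ∈ g e) :
    ∃ m ≤ g e, Multiset.card m = 2 ∧ a ∈ m ∧ IsHyperforest (Function.update g e m) := by
  obtain ⟨t, ht⟩ := Multiset.exists_cons_of_mem ha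
  obtain ⟨b, c, rfl⟩ : ∃ b c, t = {b, c} := Multiset.card_eq_two.1 (by simpa [ht] using h3)
  rw [ht]
  by_cases hbc : ∃ X, IsTight g X ∧ a ∈ X ∧ b ∈ X ∧ c ∉ X
  · obtain ⟨X, hXt, haX, hbX, hcX⟩ := hbc
    have hle : ({a, c} : Multiset V) ≤ a ::ₘ {b, c} :=
      Multiset.cons_le_cons a (Multiset.singleton_le.2 (by simp))
    refine ⟨{a, c}, hle, rfl, by simp, hg.update (ht ▸ hle) fun Y hYt hacY ↦ ?_⟩
    have hacY' : a ∈ Y ∧ c ∈ Y := by simpa using hacY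
    have heXY : e ∈ insideEdges g (X ∪ Y) := by
      simp only [mem_insideEdges, ht]
      simp [haX, hbX, hacY'.2]
    rcases mem_union.1 (hg.insideEdges_union_subset hXt hYt ⟨a, by simp [haX, hacY'.1]⟩ heXY)
      with h | h
    · exact absurd (mem_insideEdges.1 h c (by simp [ht])) hcX
    · exact mem_insideEdges.1 h
  · have hle : ({a, b} : Multiset V) ≤ a ::ₘ {b, c} :=
      Multiset.cons_le_cons a (Multiset.singleton_le.2 (by simp))
    refine ⟨{a, b}, hle, rfl, by simp, hg.update (ht ▸ hle) fun X hXt habX ↦ ?_⟩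
    have habX' : a ∈ X ∧ b ∈ X := by simpa using habX
    rw [ht]
    simpa [habX'] using fun hc ↦ hbc ⟨X, hXt, habX'.1, habX'.2, hc⟩

lemma IsHyperforest.exists_shrink_to_pairs (hg : IsHyperforest g)
    (hsize : ∀ e, Multiset.card (g e) = 2 ∨ Multiset.card (g e) = 3)
    (anch : E → V) (hanch : ∀ e, anch e ∈ g e) :
    ∃ g' : E → Multiset V, (∀ e, g' e ≤ g e) ∧ (∀ e, Multiset.card (g' e) = 2) ∧
      IsHyperforest g' ∧ ∀ e, anch e ∈ g' e := by
  classical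
  suffices ∀ (s : Finset E) (g : E → Multiset V), IsHyperforest g → (∀ e, anch e ∈ g e) →
      (∀ e, Multiset.card (g e) = 2 ∨ e ∈ s ∧ Multiset.card (g e) = 3) →
      ∃ g' : E → Multiset V, (∀ e, g' e ≤ g e) ∧ (∀ e, Multiset.card (g' e) = 2) ∧
        IsHyperforest g' ∧ ∀ e, anch e ∈ g' e from
    this univ g hg hanch fun e ↦ (hsize e).imp_right (⟨mem_univ e, ·⟩)
  intro s
  induction s using Finset.induction_on with
  | empty =>
    intro g hg hanch hsize
    exact ⟨g, fun _ ↦ le_rfl, fun e ↦ (hsize e).resolve_right (by simp), hg, hanch⟩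
  | insert e s hes ih =>
    intro g hg hanch hsize
    obtain ⟨m, hm, hm2, ham, hgm⟩ : ∃ m ≤ g e, Multiset.card m = 2 ∧ anch e ∈ m ∧
        IsHyperforest (Function.update g e m) := by
      rcases hsize e with h2 | ⟨-, h3⟩
      · exact ⟨g e, le_rfl, h2, hanch e, by rwa [Function.update_eq_self]⟩
      · exact hg.exists_update_pair h3 (hanch e)
    obtain ⟨g', hle, h2, hg', hanch'⟩ := ih (Function.update g e m) hgm
      (fun e' ↦ by rcases eq_or_ne e' e with rfl | h <;> simp [*])
      (fun e' ↦ by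
        rcases eq_or_ne e' e with rfl | h
        · simp [hm2]
        · simpa [Function.update_of_ne h, h] using hsize e')
    refine ⟨g', fun e' ↦ (hle e').trans ?_, h2, hg', hanch'⟩
    rcases eq_or_ne e' e with rfl | h <;> simp [*]

lemma IsHyperforest.hConn (hg : IsHyperforest g) (hcard : Fintype.card E = Fintype.card V - 1) :
    HConn g := by
  classical
  intro u v
  by_contra huv
  -- every hyperedge lies inside the component `C` of `u` or inside its complement
  set C : Finset V := {w | Relation.ReflTransGen (HAdj g) u w}
  have hsplit : insideEdges g C ∪ insideEdges g Cᶜ = univ := by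
    refine eq_univ_of_forall fun e ↦ ?_
    by_cases h : ∃ x ∈ g e, x ∈ C
    · obtain ⟨x, hx, hxC⟩ := h
      refine mem_union_left _ (mem_insideEdges.2 fun y hy ↦ ?_)
      simp only [C, mem_filter, mem_univ, true_and] at hxC ⊢
      exact hxC.tail ⟨e, hx, hy⟩
    · push Not at h
      exact mem_union_right _ (mem_insideEdges.2 fun y hy ↦ mem_compl.2 (h y hy))
  have := card_union_le (insideEdges g C) (insideEdges g Cᶜ)
  rw [hsplit, card_univ] at this
  have := hg C ⟨u, by simp [C, Relation.ReflTransGen.refl]⟩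
  have := hg Cᶜ ⟨v, by simpa [C] using huv⟩
  have := card_compl C
  have := C.card_le_univ
  omega

/-- Hall's theorem for `deg v / k` copies of each vertex `v`: the Hall condition holds because
each hyperedge is counted by at most `k` vertices. -/
lemma exists_orientation (k : ℕ) (g : E → Multiset V) (hne : ∀ e, g e ≠ 0)
    (hk : ∀ e, Multiset.card (g e) ≤ k) :
    ∃ anch : E → V, (∀ e, anch e ∈ g e) ∧ ∀ v, #{e | v ∈ g e} / k ≤ #{e | anch e = v} := by
  classical
  set edgesAt : V → Finset E := fun v ↦ {e | v ∈ g e}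
  have hall (s : Finset (Σ v, Fin (#(edgesAt v) / k))) :
      #s ≤ #(s.biUnion fun i ↦ edgesAt i.1) := by
    set S := s.image Sigma.fst
    set U := s.biUnion fun i ↦ edgesAt i.1
    have hs : #s ≤ ∑ v ∈ S, #(edgesAt v) / k := by
      calc #s ≤ #(S.sigma fun v ↦ (univ : Finset (Fin (#(edgesAt v) / k)))) :=
            card_le_card fun i hi ↦ mem_sigma.2 ⟨mem_image_of_mem _ hi, mem_univ _⟩
        _ = ∑ v ∈ S, #(edgesAt v) / k := by simp [card_sigma]
    have hdouble : ∑ v ∈ S, #(edgesAt v) ≤ #U * k :=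
      calc ∑ v ∈ S, #(edgesAt v)
          = ∑ v ∈ S, #(U.bipartiteAbove (fun v e ↦ v ∈ g e) v) := by
            refine sum_congr rfl fun v hv ↦ congrArg card (ext fun e ↦ ?_)
            obtain ⟨i, hi, rfl⟩ := mem_image.1 hv
            simp only [edgesAt, mem_bipartiteAbove, mem_filter, mem_univ, true_and,
              U, mem_biUnion]
            exact ⟨fun he ↦ ⟨⟨i, hi, he⟩, he⟩, And.right⟩
        _ = ∑ e ∈ U, #(S.bipartiteBelow (fun v e ↦ v ∈ g e) e) :=
            sum_card_bipartiteAbove_eq_sum_card_bipartiteBelow _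
        _ ≤ ∑ _e ∈ U, k := sum_le_sum fun e _ ↦
            calc #(S.bipartiteBelow (fun v e ↦ v ∈ g e) e)
                ≤ #(g e).toFinset := card_le_card fun v hv ↦ by simp_all [bipartiteBelow]
              _ ≤ k := (Multiset.toFinset_card_le _).trans (hk e)
        _ = #U * k := by simp
    have hfloor : k * ∑ v ∈ S, #(edgesAt v) / k ≤ ∑ v ∈ S, #(edgesAt v) := by
      rw [mul_sum]
      exact sum_le_sum fun v _ ↦ Nat.mul_div_le _ _
    rcases k.eq_zero_or_pos with rfl | hk0
    · simp only [Nat.div_zero, sum_const_zero, Nat.le_zero, card_eq_zero] at hs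
      simp [hs]
    · exact le_of_mul_le_mul_left
        ((Nat.mul_le_mul_left k hs).trans (hfloor.trans (hdouble.trans (mul_comm _ _).le))) hk0
  obtain ⟨f, hf_inj, hf⟩ := (all_card_le_biUnion_card_iff_exists_injective _).1 hall
  choose fallback hfallback using fun e ↦ Multiset.exists_mem_of_ne_zero (hne e)
  refine ⟨Function.extend f Sigma.fst fallback, fun e ↦ ?_, fun v ↦ ?_⟩
  · by_cases h : ∃ i, f i = e
    · obtain ⟨i, rfl⟩ := h
      rw [hf_inj.extend_apply]
      simpa [edgesAt] using hf i
    · rw [Function.extend_apply' _ _ _ h]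
      exact hfallback e
  · calc #(edgesAt v) / k = #(univ.image (f ∘ Sigma.mk v)) := by
          rw [card_image_of_injective _ (hf_inj.comp sigma_mk_injective)]
          simp
      _ ≤ _ := card_le_card fun e he ↦ by
          obtain ⟨j, -, rfl⟩ := mem_image.1 he
          simp [hf_inj.extend_apply]

lemma _root_.IsHypertree.isHyperforest {g : E → Multiset V} (h : IsHypertree g) :
    IsHyperforest g := by
  intro X hX
  have hX' := h.2.2 X
  rw [Nat.card_coe_set_eq, Set.ncard_coe_finset] at hX'
  simp only [Nat.card_eq_fintype_card, Fintype.card_subtype, mem_coe] at hX'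
  have := hX.card_pos
  unfold insideEdges
  omega

end Hypergraph

open Finset Hypergraph in
/-- a hypertree with hyperedges of size two or three can have each
size-three hyperedge shrunk to a size-two sub-edge so that the result is a
spanning tree `T'` with `deg_{T'}(v) ≥ deg_H(v)/100` at every vertex. -/
theorem stmt14 (V E : Type) [Fintype V] [Fintype E] (edges : E → Multiset V)
    (htree : IsHypertree edges)
    (hsize : ∀ e, (edges e).card = 2 ∨ (edges e).card = 3) :
    ∃ edges' : E → Multiset V,
      (∀ e, edges' e ≤ edges e) ∧
      (∀ e, (edges' e).card = 2) ∧
      (∀ e, (edges e).card = 2 → edges' e = edges e) ∧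
      HConn edges' ∧
      ∀ v : V,
        Nat.card {e : E // v ∈ edges e} ≤
          100 * Nat.card {e : E // v ∈ edges' e} := by
  classical
  obtain ⟨anch, hanch, hdeg⟩ := exists_orientation 3 edges
    (fun e h ↦ by simpa [h] using hsize e)
    (fun e ↦ (hsize e).elim (·.trans_le (by norm_num)) (·.le))
  obtain ⟨g, hle, hcard2, hg, hanch'⟩ :=
    htree.isHyperforest.exists_shrink_to_pairs hsize anch hanch
  have hconn := hg.hConn htree.1
  refine ⟨g, hle, hcard2, fun e he ↦ Multiset.eq_of_le_of_card_le (hle e) (by rw [he, hcard2 e]),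
    hconn, fun v ↦ ?_⟩
  simp only [Nat.card_eq_fintype_card, Fintype.card_subtype]
  have hkept : #{e | anch e = v} ≤ #{e | v ∈ g e} :=
    card_le_card fun e ↦ by simp only [mem_filter, mem_univ, true_and]; rintro rfl; exact hanch' e
  have hpos : 0 < #{e | v ∈ edges e} → 0 < #{e | v ∈ g e} := fun h ↦ by
    obtain ⟨e, -⟩ := card_pos.1 h
    have := Fintype.card_pos_iff.2 ⟨e⟩
    obtain ⟨u, hu⟩ := Fintype.exists_ne_of_one_lt_card (by have := htree.1; omega) v
    obtain ⟨e', he'⟩ := hconn.exists_mem hu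
    exact card_pos.2 ⟨e', by simpa using he'⟩
  have := hdeg v
  omega
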